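/- arXiv:1801.06702 — 8 statements merged into one kernel-verified Lean document; each statement's English description precedes it below -/
import Mathlib

section
/- Let P > 0 and let α, β ∈ (−1,1) with α ≠ β, and set σ = sign(β − α) ∈ {−1, 1}. Then there exists a unique x₀ ∈ (0,1) satisfying P·x₀²·(1 + σβx₀) = (1 − x₀²)·(1 + σαx₀)²; i.e., the fourth-order polynomial P·x²·(1 + σβx) − (1 − x²)·(1 + σαx)² has exactly one root in the open interval (0,1). -/
/-!
Put `a = σα` and `b = σβ`; since `σ(β - α) = |β - α|`, we have `-1 < a ≤ b`. Existence is the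
intermediate value theorem: the difference of the two sides is `-1` at `x = 0` and `P(1 + b) > 0`
at `x = 1`. A root in `(0,1)` solves `R(x) = P` for
`R(x) = (1 - x²)(1 + ax)² / (x²(1 + bx)) = (1/x - x)(1/x + a) · (1 + ax)/(1 + bx)`,
a product of positive antitone factors on `(0,1)`, the first one strictly antitone; so `R` is
injective there.
-/

open Set

noncomputable section

def armaRatio (a b x : ℝ) : ℝ :=
  (1 - x ^ 2) * (1 + a * x) ^ 2 / (x ^ 2 * (1 + b * x))

variable {P a b : ℝ}

lemma one_add_mul_pos_of_mem_Ioo {c x : ℝ} (hc : -1 < c) (hx : x ∈ Ioo (0 : ℝ) 1) :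
    0 < 1 + c * x := by
  nlinarith [hx.1, hx.2]

lemma armaRatio_eq_iff (hb : -1 < b) {x : ℝ} (hx : x ∈ Ioo (0 : ℝ) 1) :
    armaRatio a b x = P ↔ P * x ^ 2 * (1 + b * x) = (1 - x ^ 2) * (1 + a * x) ^ 2 := by
  have := one_add_mul_pos_of_mem_Ioo hb hx
  have := hx.1
  rw [armaRatio, div_eq_iff (by positivity), mul_assoc, eq_comm]

lemma armaRatio_eq_mul (hb : -1 < b) {x : ℝ} (hx : x ∈ Ioo (0 : ℝ) 1) :
    armaRatio a b x = (x⁻¹ - x) * (x⁻¹ + a) * ((1 + a * x) / (1 + b * x)) := by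
  have := (one_add_mul_pos_of_mem_Ioo hb hx).ne'
  have := hx.1.ne'
  rw [armaRatio]
  field_simp

lemma div_one_add_mul_antitoneOn (ha : -1 < a) (hab : a ≤ b) :
    AntitoneOn (fun x ↦ (1 + a * x) / (1 + b * x)) (Ioo 0 1) := by
  intro x hx y hy hxy
  have hbx := one_add_mul_pos_of_mem_Ioo (ha.trans_le hab) hx
  have hby := one_add_mul_pos_of_mem_Ioo (ha.trans_le hab) hy
  rw [div_le_div_iff₀ hby hbx]
  nlinarith [mul_nonneg (sub_nonneg.2 hab) (sub_nonneg.2 hxy)]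

lemma strictAntiOn_armaRatio (ha : -1 < a) (hab : a ≤ b) :
    StrictAntiOn (armaRatio a b) (Ioo 0 1) := by
  intro x hx y hy hxy
  have hb := ha.trans_le hab
  have hx₀ := hx.1
  have hy₁ := hy.2
  have hinv : y⁻¹ < x⁻¹ := (inv_lt_inv₀ hy.1 hx.1).2 hxy
  have hy_inv : 1 < y⁻¹ := one_lt_inv₀ hy.1 |>.2 hy.2
  have hquot : 0 < (1 + a * y) / (1 + b * y) :=
    div_pos (one_add_mul_pos_of_mem_Ioo ha hy) (one_add_mul_pos_of_mem_Ioo hb hy)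
  rw [armaRatio_eq_mul hb hx, armaRatio_eq_mul hb hy]
  refine mul_lt_mul ?_ (div_one_add_mul_antitoneOn ha hab hx hy hxy.le) hquot (by nlinarith)
  exact mul_lt_mul'' (by linarith) (by linarith) (by linarith) (by linarith)

lemma exists_root_mem_Ioo (hP : 0 < P) (hb : -1 < b) :
    ∃ x ∈ Ioo (0 : ℝ) 1, P * x ^ 2 * (1 + b * x) = (1 - x ^ 2) * (1 + a * x) ^ 2 := by
  set f : ℝ → ℝ := fun x ↦ P * x ^ 2 * (1 + b * x) - (1 - x ^ 2) * (1 + a * x) ^ 2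
  have hcont : ContinuousOn f (Icc 0 1) := by fun_prop
  have hsign : (0 : ℝ) ∈ Ioo (f 0) (f 1) := by
    have : 0 < P * (1 + b) := mul_pos hP (by linarith)
    exact ⟨by norm_num [f], by norm_num [f]; linarith⟩
  obtain ⟨x, hx, hfx⟩ := intermediate_value_Ioo zero_le_one hcont hsign
  exact ⟨x, hx, sub_eq_zero.1 hfx⟩

theorem existsUnique_root_mem_Ioo (hP : 0 < P) (ha : -1 < a) (hab : a ≤ b) :
    ∃! x ∈ Ioo (0 : ℝ) 1, P * x ^ 2 * (1 + b * x) = (1 - x ^ 2) * (1 + a * x) ^ 2 := by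
  have hb := ha.trans_le hab
  obtain ⟨x, hx, hroot⟩ := exists_root_mem_Ioo hP hb
  refine ⟨x, ⟨hx, hroot⟩, fun y ⟨hy, hyroot⟩ ↦ ?_⟩
  refine (strictAntiOn_armaRatio ha hab).injOn hy hx ?_
  rw [(armaRatio_eq_iff hb hy).2 hyroot, (armaRatio_eq_iff hb hx).2 hroot]

lemma neg_one_lt_sign_mul {r α : ℝ} (hα : α ∈ Ioo (-1 : ℝ) 1) : -1 < Real.sign r * α := by
  rcases Real.sign_apply_eq r with h | h | h <;> rw [h] <;> linarith [hα.1, hα.2]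

end

theorem arma1_unique_root_general (P α β : ℝ) (hP : 0 < P)
    (hα : α ∈ Set.Ioo (-1 : ℝ) 1)
    (σ : ℝ) (hσ : σ = Real.sign (β - α)) :
    ∃! x₀ : ℝ, x₀ ∈ Set.Ioo (0 : ℝ) 1 ∧
      P * x₀ ^ 2 * (1 + σ * β * x₀) = (1 - x₀ ^ 2) * (1 + σ * α * x₀) ^ 2 := by
  have hab : σ * α ≤ σ * β := by
    have := Real.sign_mul_nonneg (β - α)
    rw [hσ]
    linarith
  exact existsUnique_root_mem_Ioo hP (hσ ▸ neg_one_lt_sign_mul hα) hab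

/-- For `P > 0`, `α, β ∈ (−1,1)` with `α ≠ β`, and `σ = sign(β − α)`,
there is exactly one `x₀ ∈ (0,1)` with `P·x₀²·(1 + σβx₀) = (1 − x₀²)·(1 + σαx₀)²`. -/
theorem arma1_unique_root (P α β : ℝ) (hP : 0 < P)
    (hα : α ∈ Set.Ioo (-1 : ℝ) 1) (hβ : β ∈ Set.Ioo (-1 : ℝ) 1) (hαβ : α ≠ β)
    (σ : ℝ) (hσ : σ = Real.sign (β - α)) :
    ∃! x₀ : ℝ, x₀ ∈ Set.Ioo (0 : ℝ) 1 ∧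
      P * x₀ ^ 2 * (1 + σ * β * x₀) = (1 - x₀ ^ 2) * (1 + σ * α * x₀) ^ 2 :=
  arma1_unique_root_general P α β hP hα σ hσ
end

section
/- Fix integers m ≥ 1 and h ≥ 1, points θ₁, …, θ_{2m} ∈ [−π, π], positive reals S₁, …, S_{2m} > 0, and a real P. For θ ∈ ℝ let A(θ) = (cos θ, cos 2θ, …, cos hθ) ∈ ℝ^h and B(θ) = (sin θ, sin 2θ, …, sin hθ) ∈ ℝ^h, and for (λ, η, η₀) ∈ ℝ × ℝ^h × ℝ define r_i²(λ, η, η₀) = (2λS_i + η·A(θ_i) + η₀)² + (η·B(θ_i))². Then the function g̃(λ, η, η₀, ν) = (1/(2m))·Σ_{i=1}^{2m} [ (1/2)·log(2λS_i − ν_i) + λS_i − r_i²(λ, η, η₀)/(2ν_i) − λP + η₀ + 1/2 ] is concave on the convex domain { (λ, η, η₀, ν) ∈ ℝ × ℝ^h × ℝ × ℝ^{2m} : λ > 0, ν_i > 0 and 2λS_i − ν_i > 0 for all i }. -/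
/-!
Write `x = (λ, η, η₀, ν)`. The `i`-th summand of `g̃` is `½ log L − ‖w‖² / (2ν)` plus an affine
function of `x`, evaluated at `L = 2λSᵢ − νᵢ`, `ν = νᵢ` and
`w = 2λSᵢ + η₀ + Σⱼ ηⱼ e^{i(j+1)θᵢ} ∈ ℂ`, whose modulus is `rᵢ`. All three are linear in `x`.
The logarithm is concave and `(w, ν) ↦ ‖w‖² / ν` is convex on `ν > 0` (it is the perspective
of `‖·‖²`), and concavity survives linear substitution, nonnegative scaling and finite sums.
-/

open Real Finset

theorem ConcaveOn.fun_sum {𝕜 E β ι : Type*} [Semiring 𝕜] [PartialOrder 𝕜] [AddCommMonoid E]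
    [AddCommMonoid β] [PartialOrder β] [IsOrderedAddMonoid β] [SMul 𝕜 E] [Module 𝕜 β]
    {s : Set E} {f : ι → E → β} (t : Finset ι) (hs : Convex 𝕜 s)
    (hf : ∀ i ∈ t, ConcaveOn 𝕜 s (f i)) : ConcaveOn 𝕜 s fun x => ∑ i ∈ t, f i x := by
  classical
  induction t using Finset.induction_on with
  | empty => simpa using concaveOn_const (0 : β) hs
  | insert i t hi ih =>
    simp_rw [Finset.sum_insert hi]
    exact (hf i (mem_insert_self i t)).add (ih fun j hj => hf j (mem_insert_of_mem hj))

theorem convexOn_norm_sq_div {F : Type*} [SeminormedAddCommGroup F] [NormedSpace ℝ F] :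
    ConvexOn ℝ {p : F × ℝ | 0 < p.2} fun p => ‖p.1‖ ^ 2 / p.2 := by
  refine ⟨fun p hp q hq a b ha hb hab => convex_Ioi (0 : ℝ) hp hq ha hb hab, ?_⟩
  rintro ⟨w₁, t₁⟩ (ht₁ : 0 < t₁) ⟨w₂, t₂⟩ (ht₂ : 0 < t₂) a b ha hb hab
  have ht : 0 < a * t₁ + b * t₂ := convex_Ioi (0 : ℝ) ht₁ ht₂ ha hb hab
  have hnorm : ‖a • w₁ + b • w₂‖ ≤ a * ‖w₁‖ + b * ‖w₂‖ := by
    simpa only [norm_smul, Real.norm_of_nonneg ha, Real.norm_of_nonneg hb]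
      using norm_add_le (a • w₁) (b • w₂)
  have hscalar : ∀ u₁ u₂ : ℝ,
      (a * u₁ + b * u₂) ^ 2 / (a * t₁ + b * t₂) ≤ a * (u₁ ^ 2 / t₁) + b * (u₂ ^ 2 / t₂) := by
    intro u₁ u₂
    have hrhs : a * (u₁ ^ 2 / t₁) + b * (u₂ ^ 2 / t₂)
        = (a * u₁ ^ 2 * t₂ + b * u₂ ^ 2 * t₁) / (t₁ * t₂) := by
      field_simp
    rw [hrhs, div_le_div_iff₀ ht (mul_pos ht₁ ht₂)]
    nlinarith [mul_nonneg (mul_nonneg ha hb) (sq_nonneg (u₁ * t₂ - u₂ * t₁))]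
  simp only [Prod.smul_mk, Prod.mk_add_mk, smul_eq_mul]
  calc ‖a • w₁ + b • w₂‖ ^ 2 / (a * t₁ + b * t₂)
      ≤ (a * ‖w₁‖ + b * ‖w₂‖) ^ 2 / (a * t₁ + b * t₂) := by gcongr
    _ ≤ a * (‖w₁‖ ^ 2 / t₁) + b * (‖w₂‖ ^ 2 / t₂) := hscalar _ _

theorem concaveOn_log_sub_norm_sq_div {F : Type*} [SeminormedAddCommGroup F] [NormedSpace ℝ F] :
    ConcaveOn ℝ {p : ℝ × ℝ × F | 0 < p.1 ∧ 0 < p.2.1}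
      fun p => log p.1 / 2 - ‖p.2.2‖ ^ 2 / (2 * p.2.1) := by
  have hs : Convex ℝ {p : ℝ × ℝ × F | 0 < p.1 ∧ 0 < p.2.1} :=
    ((convex_Ioi 0).linear_preimage (LinearMap.fst ℝ ℝ _)).inter
      ((convex_Ioi 0).linear_preimage ((LinearMap.fst ℝ ℝ F).comp (LinearMap.snd ℝ ℝ _)))
  have hlog := (strictConcaveOn_log_Ioi.concaveOn.comp_linearMap
    (LinearMap.fst ℝ ℝ (ℝ × F))).subset (fun p hp => hp.1) hs
  have hquad := (convexOn_norm_sq_div.comp_linearMap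
    (((LinearMap.snd ℝ ℝ F).prod (LinearMap.fst ℝ ℝ F)).comp (LinearMap.snd ℝ ℝ (ℝ × F)))).subset
    (fun p hp => hp.2) hs
  refine ((hlog.smul (by norm_num : (0 : ℝ) ≤ 1 / 2)).sub
    (hquad.smul (by norm_num : (0 : ℝ) ≤ 1 / 2))).congr fun p _ => ?_
  show 1 / 2 * log p.1 - 1 / 2 * (‖p.2.2‖ ^ 2 / p.2.1) = _
  ring

variable {h n : ℕ}

noncomputable def dualCoords (θ S : Fin n → ℝ) (i : Fin n) :
    ℝ × (Fin h → ℝ) × ℝ × (Fin n → ℝ) →ₗ[ℝ] ℝ × ℝ × ℂ where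
  toFun x := (2 * x.1 * S i - x.2.2.2 i, x.2.2.2 i,
    ↑(2 * x.1 * S i + x.2.2.1) +
      ∑ j : Fin h, ↑(x.2.1 j) * Complex.exp (↑(((j : ℕ) + 1 : ℝ) * θ i) * Complex.I))
  map_add' x y := by
    ext <;> simp only [Prod.fst_add, Prod.snd_add, Pi.add_apply, Complex.ofReal_add, add_mul,
      sum_add_distrib] <;> push_cast <;> ring
  map_smul' c x := by
    ext <;> simp only [Prod.smul_fst, Prod.smul_snd, Pi.smul_apply, smul_eq_mul, Complex.ofReal_mul,
      RingHom.id_apply, Complex.real_smul, mul_add, mul_sum, mul_assoc] <;> push_cast <;> ring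

variable (θ S : Fin n → ℝ) (i : Fin n) (x : ℝ × (Fin h → ℝ) × ℝ × (Fin n → ℝ))

theorem dualCoords_fst : (dualCoords θ S i x).1 = 2 * x.1 * S i - x.2.2.2 i := rfl

theorem dualCoords_snd_fst : (dualCoords θ S i x).2.1 = x.2.2.2 i := rfl

theorem norm_dualCoords_snd_snd_sq :
    ‖(dualCoords θ S i x).2.2‖ ^ 2 =
      (2 * x.1 * S i + ∑ j : Fin h, x.2.1 j * cos (((j : ℕ) + 1 : ℝ) * θ i) + x.2.2.1) ^ 2
        + (∑ j : Fin h, x.2.1 j * sin (((j : ℕ) + 1 : ℝ) * θ i)) ^ 2 := by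
  simp only [dualCoords, LinearMap.coe_mk, AddHom.coe_mk, Complex.sq_norm, Complex.normSq_apply,
    Complex.add_re, Complex.add_im, Complex.ofReal_re, Complex.ofReal_im, Complex.re_sum,
    Complex.im_sum, Complex.re_ofReal_mul, Complex.im_ofReal_mul, Complex.exp_ofReal_mul_I_re,
    Complex.exp_ofReal_mul_I_im]
  ring

theorem dual_objective_concave_general (m h : ℕ)
    (θ : Fin (2 * m) → ℝ)
    (S : Fin (2 * m) → ℝ) (P : ℝ) :
    ConcaveOn ℝ
      {x : ℝ × (Fin h → ℝ) × ℝ × (Fin (2 * m) → ℝ) |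
        0 < x.1 ∧ ∀ i, 0 < x.2.2.2 i ∧ 0 < 2 * x.1 * S i - x.2.2.2 i}
      (fun x =>
        (1 / (2 * (m : ℝ))) *
          ∑ i, ((1 / 2) * Real.log (2 * x.1 * S i - x.2.2.2 i)
            + x.1 * S i
            - ((2 * x.1 * S i + (∑ j, x.2.1 j * Real.cos (((j : ℕ) + 1 : ℝ) * θ i))
                  + x.2.2.1) ^ 2
                + (∑ j, x.2.1 j * Real.sin (((j : ℕ) + 1 : ℝ) * θ i)) ^ 2)
                / (2 * x.2.2.2 i)
            - x.1 * P + x.2.2.1 + 1 / 2)) := by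
  have hD : Convex ℝ {x : ℝ × (Fin h → ℝ) × ℝ × (Fin (2 * m) → ℝ) |
      0 < x.1 ∧ ∀ i, 0 < x.2.2.2 i ∧ 0 < 2 * x.1 * S i - x.2.2.2 i} := by
    rintro x ⟨hx, hxi⟩ y ⟨hy, hyi⟩ a b ha hb hab
    refine ⟨convex_Ioi (0 : ℝ) hx hy ha hb hab,
      fun i => ⟨convex_Ioi (0 : ℝ) (hxi i).1 (hyi i).1 ha hb hab, ?_⟩⟩
    have hcombo := convex_Ioi (0 : ℝ) (hxi i).2 (hyi i).2 ha hb hab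
    simp only [Set.mem_Ioi, Prod.fst_add, Prod.snd_add, Prod.smul_fst, Prod.smul_snd, Pi.add_apply,
      Pi.smul_apply, smul_eq_mul] at hcombo ⊢
    linarith
  refine ConcaveOn.smul (by positivity) (ConcaveOn.fun_sum _ hD fun i _ => ?_)
  have hmain := ((concaveOn_log_sub_norm_sq_div (F := ℂ)).comp_linearMap (dualCoords θ S i)).subset
    (fun x hx => And.intro (hx.2 i).2 (hx.2 i).1) hD
  have haffine := ((S i - P) • LinearMap.fst ℝ ℝ _ + (LinearMap.fst ℝ ℝ _).comp
    ((LinearMap.snd ℝ (Fin h → ℝ) _).comp (LinearMap.snd ℝ ℝ _))).concaveOn hD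
  refine ((hmain.add haffine).add_const (1 / 2)).congr fun x _ => ?_
  simp only [Pi.add_apply, Function.comp_apply, dualCoords_fst, dualCoords_snd_fst,
    norm_dualCoords_snd_snd_sq, LinearMap.add_apply, LinearMap.smul_apply, LinearMap.coe_comp,
    LinearMap.coe_fst, LinearMap.coe_snd, smul_eq_mul]
  ring

/-- Concavity of the discretized dual objective `g̃` of the
feedback-capacity upper-bound problem on its convex domain. -/
theorem dual_objective_concave (m h : ℕ) (hm : 1 ≤ m) (hh : 1 ≤ h)
    (θ : Fin (2 * m) → ℝ) (hθ : ∀ i, θ i ∈ Set.Icc (-Real.pi) Real.pi)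
    (S : Fin (2 * m) → ℝ) (hS : ∀ i, 0 < S i) (P : ℝ) :
    ConcaveOn ℝ
      {x : ℝ × (Fin h → ℝ) × ℝ × (Fin (2 * m) → ℝ) |
        0 < x.1 ∧ ∀ i, 0 < x.2.2.2 i ∧ 0 < 2 * x.1 * S i - x.2.2.2 i}
      (fun x =>
        (1 / (2 * (m : ℝ))) *
          ∑ i, ((1 / 2) * Real.log (2 * x.1 * S i - x.2.2.2 i)
            + x.1 * S i
            - ((2 * x.1 * S i + (∑ j, x.2.1 j * Real.cos (((j : ℕ) + 1 : ℝ) * θ i))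
                  + x.2.2.1) ^ 2
                + (∑ j, x.2.1 j * Real.sin (((j : ℕ) + 1 : ℝ) * θ i)) ^ 2)
                / (2 * x.2.2.2 i)
            - x.1 * P + x.2.2.1 + 1 / 2)) :=
  dual_objective_concave_general m h θ S P
end

section
/- Under the initialized feedback coding scheme 𝕂, for every k ≥ m+1 the message-estimate error satisfies the recursion x̂_{u0}(k) − x_{u0} = (I_m − A_u^{−(k+1)} B_u C_u A_u^{k}) · (x̂_{u0}(k−1) − x_{u0}) + A_u^{−(k+1)} B_u · (w(k) − C_s x_s(k)), where I_m is the m×m identity matrix. -/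
open Matrix

/-- Under the initialized feedback coding scheme 𝕂, for every `k ≥ m+1`
the message-estimate error satisfies
`x̂_{u0}(k) − x_{u0} = (I − A_u^{−(k+1)} B_u C_u A_u^{k})(x̂_{u0}(k−1) − x_{u0})
  + A_u^{−(k+1)} B_u (w(k) − C_s x_s(k))`. -/
theorem estimate_error_recursion (m p : ℕ) (hm : 1 ≤ m)
    (A_u : Matrix (Fin m) (Fin m) ℝ) (hA : IsUnit A_u.det)
    (A_s : Matrix (Fin p) (Fin p) ℝ)
    (B_u : Fin m → ℝ) (B_s : Fin p → ℝ) (C_u : Fin m → ℝ) (C_s : Fin p → ℝ)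
    (x0 : Fin m → ℝ) (w : ℕ → ℝ)
    (u y : ℕ → ℝ) (xs : ℕ → Fin p → ℝ) (xhat : ℕ → Fin m → ℝ)
    (xhat0 : ℕ → Fin m → ℝ)
    (hy : ∀ k, y k = u k + w k)
    (hu_init : ∀ i : Fin m, u ((i : ℕ) + 1) = (A_u ^ (m + 1) *ᵥ x0) i)
    (hxhat_init : xhat (m + 1) = fun i : Fin m => y ((i : ℕ) + 1))
    (hxs_init : xs (m + 1) = 0)
    (hxs : ∀ k, m + 1 ≤ k → xs (k + 1) = A_s *ᵥ xs k + y k • B_s)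
    (hxhat : ∀ k, m + 1 ≤ k → xhat (k + 1) = A_u *ᵥ xhat k + y k • B_u)
    (hu : ∀ k, m + 1 ≤ k →
      u k = C_u ⬝ᵥ (A_u ^ k *ᵥ x0) - C_s ⬝ᵥ xs k - C_u ⬝ᵥ xhat k)
    (hxhat0 : ∀ k, m ≤ k → xhat0 k = (A_u ^ (k + 1))⁻¹ *ᵥ xhat (k + 1)) :
    ∀ k, m + 1 ≤ k →
      xhat0 k - x0 =
        ((1 : Matrix (Fin m) (Fin m) ℝ)
            - (A_u ^ (k + 1))⁻¹ * vecMulVec B_u C_u * A_u ^ k) *ᵥ (xhat0 (k - 1) - x0)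
          + (w k - C_s ⬝ᵥ xs k) • ((A_u ^ (k + 1))⁻¹ *ᵥ B_u) := by
  intro k hk
  have hk1 : m ≤ k - 1 := by omega
  have hkk : k - 1 + 1 = k := by omega
  have hdet : ∀ n : ℕ, IsUnit (A_u ^ n).det := by
    intro n; rw [Matrix.det_pow]; exact hA.pow n
  have hinv : ∀ n (v : Fin m → ℝ), (A_u ^ n)⁻¹ *ᵥ (A_u ^ n *ᵥ v) = v := by
    intro n v
    rw [mulVec_mulVec, Matrix.nonsing_inv_mul _ (hdet n), one_mulVec]
  have hvmv : ∀ (v : Fin m → ℝ), vecMulVec B_u C_u *ᵥ v = (C_u ⬝ᵥ v) • B_u := by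
    intro v
    ext i
    simp only [vecMulVec, mulVec, dotProduct, Matrix.of_apply, Pi.smul_apply,
      smul_eq_mul, Finset.sum_mul]
    exact Finset.sum_congr rfl (fun x _ => by ring)
  have hxk : xhat k = A_u ^ k *ᵥ xhat0 (k - 1) := by
    have h := hxhat0 (k - 1) hk1
    rw [hkk] at h
    rw [h, mulVec_mulVec, Matrix.mul_nonsing_inv _ (hdet k), one_mulVec]
  have hstep : A_u *ᵥ (A_u ^ k *ᵥ xhat0 (k - 1)) = A_u ^ (k + 1) *ᵥ xhat0 (k - 1) := by
    rw [mulVec_mulVec, ← pow_succ']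
  have h0 : xhat0 k = xhat0 (k - 1) + y k • ((A_u ^ (k + 1))⁻¹ *ᵥ B_u) := by
    rw [hxhat0 k (by omega), hxhat k hk, hxk, mulVec_add, hstep, hinv, mulVec_smul]
  have hyk : y k = (w k - C_s ⬝ᵥ xs k)
      - C_u ⬝ᵥ (A_u ^ k *ᵥ (xhat0 (k - 1) - x0)) := by
    rw [hy, hu k hk, hxk, mulVec_sub, dotProduct_sub]
    ring
  rw [h0, hyk, sub_mulVec, one_mulVec, Matrix.mul_assoc, ← mulVec_mulVec,
    ← mulVec_mulVec, hvmv, mulVec_smul]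
  ext i
  simp only [Pi.add_apply, Pi.sub_apply, Pi.smul_apply, smul_eq_mul]
  ring
end

section
/- Under the initialized feedback coding scheme 𝕂, set α_i = I_m − A_u^{−(i+1)} B_u C_u A_u^{i} ∈ ℝ^{m×m} and β_i = A_u^{−(i+1)} B_u ∈ ℝ^m for i ≥ m+1, and let w_1^m = (w(1), …, w(m))ᵀ ∈ ℝ^m. Then for every k ≥ m: x̂_{u0}(k) − x_{u0} = (α_k α_{k−1} ⋯ α_{m+1}) · A_u^{−(m+1)} w_1^m + Σ_{i=m+1}^{k} (α_k α_{k−1} ⋯ α_{i+1}) · β_i · (w(i) − C_s x_s(i)), where matrix products are ordered with larger indices on the left and the empty product equals I_m. -/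
/-!
The estimation error `e k = x̂_{u0}(k) − x_{u0}` obeys a time-varying linear recursion. Because
the encoder subtracts `C_u x̂_u(k)`, the channel output is
`y(k+1) = w(k+1) − C_s x_s(k+1) − C_u A_u^{k+1} e k`, which `x_{u0}` no longer enters, so
`e(k+1) = α_{k+1} e k + (w(k+1) − C_s x_s(k+1)) β_{k+1}`; the uncoded initial transmissions give
`e m = A_u^{−(m+1)} w_1^m`. Unrolling the recursion (variation of constants) yields the formula.
-/

open Matrix

/-- Ordered product `α_k · α_{k−1} ⋯ α_{lo+1}` (larger indices on the left; the empty
product, when `k ≤ lo`, equals the identity). -/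
noncomputable def leftProd {n : ℕ} (α : ℕ → Matrix (Fin n) (Fin n) ℝ) (lo k : ℕ) :
    Matrix (Fin n) (Fin n) ℝ :=
  ((List.range' (lo + 1) (k - lo)).reverse.map α).prod

theorem one_sub_mul_vecMulVec_mul_mulVec {n : Type*} [Fintype n] [DecidableEq n]
    {R : Type*} [CommRing R] (P Q : Matrix n n R) (b c v : n → R) :
    (1 - P * vecMulVec b c * Q) *ᵥ v = v - (c ⬝ᵥ (Q *ᵥ v)) • (P *ᵥ b) := by
  rw [sub_mulVec, one_mulVec, Matrix.mul_assoc, ← mulVec_mulVec, ← mulVec_mulVec,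
    vecMulVec_mulVec, op_smul_eq_smul, mulVec_smul]

section LeftProd

variable {n : ℕ} (α : ℕ → Matrix (Fin n) (Fin n) ℝ)

theorem leftProd_of_le {lo k : ℕ} (h : k ≤ lo) : leftProd α lo k = 1 := by
  simp [leftProd, Nat.sub_eq_zero_of_le h]

theorem leftProd_succ {lo k : ℕ} (h : lo ≤ k) :
    leftProd α lo (k + 1) = α (k + 1) * leftProd α lo k := by
  have h1 : k + 1 - lo = (k - lo) + 1 := by omega
  have h2 : lo + 1 + (k - lo) = k + 1 := by omega
  simp [leftProd, h1, List.range'_concat, h2]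

theorem eq_leftProd_mulVec_add_sum_of_succ (b : ℕ → Fin n → ℝ) (c : ℕ → ℝ)
    (e : ℕ → Fin n → ℝ) (lo : ℕ)
    (he : ∀ k, lo ≤ k → e (k + 1) = α (k + 1) *ᵥ e k + c (k + 1) • b (k + 1)) :
    ∀ k, lo ≤ k →
      e k = leftProd α lo k *ᵥ e lo
        + ∑ i ∈ Finset.Icc (lo + 1) k, c i • (leftProd α i k *ᵥ b i) := by
  intro k hk
  induction k, hk using Nat.le_induction with
  | base => simp [leftProd_of_le]
  | succ k hk ih =>
    have hsum : α (k + 1) *ᵥ ∑ i ∈ Finset.Icc (lo + 1) k, c i • (leftProd α i k *ᵥ b i)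
        = ∑ i ∈ Finset.Icc (lo + 1) k, c i • (leftProd α i (k + 1) *ᵥ b i) := by
      rw [mulVec_sum]
      refine Finset.sum_congr rfl fun i hi => ?_
      rw [mulVec_smul, leftProd_succ α (Finset.mem_Icc.mp hi).2, mulVec_mulVec]
    rw [he k hk, ih, mulVec_add, hsum, leftProd_succ α hk, ← mulVec_mulVec,
      Finset.sum_Icc_succ_top (by omega), leftProd_of_le α le_rfl, one_mulVec, add_assoc]

end LeftProd

section InvPow

variable {n R : Type*} [Fintype n] [DecidableEq n] [CommRing R] {A : Matrix n n R}

theorem pow_mulVec_inv_mulVec (hA : IsUnit A.det) (j : ℕ) (v : n → R) :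
    A ^ j *ᵥ ((A ^ j)⁻¹ *ᵥ v) = v := by
  rw [mulVec_mulVec, mul_nonsing_inv _ (by rw [det_pow]; exact hA.pow j), one_mulVec]

theorem inv_pow_mulVec_pow_mulVec (hA : IsUnit A.det) (j : ℕ) (v : n → R) :
    (A ^ j)⁻¹ *ᵥ (A ^ j *ᵥ v) = v := by
  rw [mulVec_mulVec, nonsing_inv_mul _ (by rw [det_pow]; exact hA.pow j), one_mulVec]

theorem inv_pow_succ_mulVec_mulVec (hA : IsUnit A.det) (j : ℕ) (v : n → R) :
    (A ^ (j + 1))⁻¹ *ᵥ (A *ᵥ v) = (A ^ j)⁻¹ *ᵥ v := by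
  rw [mulVec_mulVec, pow_succ', Matrix.mul_inv_rev, Matrix.mul_assoc, nonsing_inv_mul _ hA,
    Matrix.mul_one]

end InvPow

section Scheme

variable {m p : ℕ} {A_u : Matrix (Fin m) (Fin m) ℝ}
variable {B_u C_u x0 : Fin m → ℝ} {C_s : Fin p → ℝ} {w u y : ℕ → ℝ}
  {xs : ℕ → Fin p → ℝ} {xhat xhat0 : ℕ → Fin m → ℝ}

theorem estimate_error_init (hA : IsUnit A_u.det) (hy : ∀ k, y k = u k + w k)
    (hu_init : ∀ i : Fin m, u ((i : ℕ) + 1) = (A_u ^ (m + 1) *ᵥ x0) i)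
    (hxhat_init : xhat (m + 1) = fun i : Fin m => y ((i : ℕ) + 1))
    (hxhat0 : xhat0 m = (A_u ^ (m + 1))⁻¹ *ᵥ xhat (m + 1)) :
    xhat0 m - x0 = (A_u ^ (m + 1))⁻¹ *ᵥ fun i : Fin m => w ((i : ℕ) + 1) := by
  have hxhat : xhat (m + 1) = A_u ^ (m + 1) *ᵥ x0 + fun i : Fin m => w ((i : ℕ) + 1) := by
    funext i
    simp [hxhat_init, hy, hu_init i]
  rw [hxhat0, hxhat, mulVec_add, inv_pow_mulVec_pow_mulVec hA, add_sub_cancel_left]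

theorem estimate_error_succ (hA : IsUnit A_u.det) (hy : ∀ k, y k = u k + w k)
    (hxhat : ∀ k, m + 1 ≤ k → xhat (k + 1) = A_u *ᵥ xhat k + y k • B_u)
    (hu : ∀ k, m + 1 ≤ k →
      u k = C_u ⬝ᵥ (A_u ^ k *ᵥ x0) - C_s ⬝ᵥ xs k - C_u ⬝ᵥ xhat k)
    (hxhat0 : ∀ k, m ≤ k → xhat0 k = (A_u ^ (k + 1))⁻¹ *ᵥ xhat (k + 1))
    {k : ℕ} (hk : m ≤ k) :
    xhat0 (k + 1) - x0 =
      (1 - (A_u ^ (k + 1 + 1))⁻¹ * vecMulVec B_u C_u * A_u ^ (k + 1)) *ᵥ (xhat0 k - x0)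
        + (w (k + 1) - C_s ⬝ᵥ xs (k + 1)) • ((A_u ^ (k + 1 + 1))⁻¹ *ᵥ B_u) := by
  have hxhat_eq : xhat (k + 1) = A_u ^ (k + 1) *ᵥ xhat0 k := by
    rw [hxhat0 k hk, pow_mulVec_inv_mulVec hA]
  have hy_eq : y (k + 1) = (w (k + 1) - C_s ⬝ᵥ xs (k + 1))
      - C_u ⬝ᵥ (A_u ^ (k + 1) *ᵥ (xhat0 k - x0)) := by
    rw [hy, hu (k + 1) (by omega), hxhat_eq, mulVec_sub, dotProduct_sub]
    ring
  have hxhat0_succ :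
      xhat0 (k + 1) = xhat0 k + y (k + 1) • ((A_u ^ (k + 1 + 1))⁻¹ *ᵥ B_u) := by
    rw [hxhat0 (k + 1) (by omega), hxhat (k + 1) (by omega), mulVec_add, mulVec_smul,
      inv_pow_succ_mulVec_mulVec hA, ← hxhat0 k hk]
  rw [hxhat0_succ, hy_eq, one_sub_mul_vecMulVec_mul_mulVec]
  module

end Scheme

theorem estimate_error_explicit_general (m p : ℕ)
    (A_u : Matrix (Fin m) (Fin m) ℝ) (hA : IsUnit A_u.det)
    (B_u : Fin m → ℝ) (C_u : Fin m → ℝ) (C_s : Fin p → ℝ)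
    (x0 : Fin m → ℝ) (w : ℕ → ℝ)
    (u y : ℕ → ℝ) (xs : ℕ → Fin p → ℝ) (xhat : ℕ → Fin m → ℝ)
    (xhat0 : ℕ → Fin m → ℝ)
    (hy : ∀ k, y k = u k + w k)
    (hu_init : ∀ i : Fin m, u ((i : ℕ) + 1) = (A_u ^ (m + 1) *ᵥ x0) i)
    (hxhat_init : xhat (m + 1) = fun i : Fin m => y ((i : ℕ) + 1))
    (hxhat : ∀ k, m + 1 ≤ k → xhat (k + 1) = A_u *ᵥ xhat k + y k • B_u)
    (hu : ∀ k, m + 1 ≤ k →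
      u k = C_u ⬝ᵥ (A_u ^ k *ᵥ x0) - C_s ⬝ᵥ xs k - C_u ⬝ᵥ xhat k)
    (hxhat0 : ∀ k, m ≤ k → xhat0 k = (A_u ^ (k + 1))⁻¹ *ᵥ xhat (k + 1)) :
    ∀ k, m ≤ k →
      xhat0 k - x0 =
        leftProd (fun i => (1 : Matrix (Fin m) (Fin m) ℝ)
            - (A_u ^ (i + 1))⁻¹ * vecMulVec B_u C_u * A_u ^ i) m k
          *ᵥ ((A_u ^ (m + 1))⁻¹ *ᵥ fun i : Fin m => w ((i : ℕ) + 1))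
        + ∑ i ∈ Finset.Icc (m + 1) k,
            (w i - C_s ⬝ᵥ xs i) •
              (leftProd (fun j => (1 : Matrix (Fin m) (Fin m) ℝ)
                  - (A_u ^ (j + 1))⁻¹ * vecMulVec B_u C_u * A_u ^ j) i k
                *ᵥ ((A_u ^ (i + 1))⁻¹ *ᵥ B_u)) := by
  rw [← estimate_error_init hA hy hu_init hxhat_init (hxhat0 m le_rfl)]
  exact eq_leftProd_mulVec_add_sum_of_succ _ (fun i => (A_u ^ (i + 1))⁻¹ *ᵥ B_u)
    (fun i => w i - C_s ⬝ᵥ xs i) (fun k => xhat0 k - x0) m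
    fun k hk => estimate_error_succ hA hy hxhat hu hxhat0 hk

/-- Under the initialized feedback coding scheme 𝕂, with
`α_i = I − A_u^{−(i+1)} B_u C_u A_u^{i}` and `β_i = A_u^{−(i+1)} B_u`, for every `k ≥ m`:
`x̂_{u0}(k) − x_{u0} = (α_k ⋯ α_{m+1}) A_u^{−(m+1)} w_1^m
  + Σ_{i=m+1}^{k} (α_k ⋯ α_{i+1}) β_i (w(i) − C_s x_s(i))`. -/
theorem estimate_error_explicit (m p : ℕ) (hm : 1 ≤ m)
    (A_u : Matrix (Fin m) (Fin m) ℝ) (hA : IsUnit A_u.det)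
    (A_s : Matrix (Fin p) (Fin p) ℝ)
    (B_u : Fin m → ℝ) (B_s : Fin p → ℝ) (C_u : Fin m → ℝ) (C_s : Fin p → ℝ)
    (x0 : Fin m → ℝ) (w : ℕ → ℝ)
    (u y : ℕ → ℝ) (xs : ℕ → Fin p → ℝ) (xhat : ℕ → Fin m → ℝ)
    (xhat0 : ℕ → Fin m → ℝ)
    (hy : ∀ k, y k = u k + w k)
    (hu_init : ∀ i : Fin m, u ((i : ℕ) + 1) = (A_u ^ (m + 1) *ᵥ x0) i)
    (hxhat_init : xhat (m + 1) = fun i : Fin m => y ((i : ℕ) + 1))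
    (hxs_init : xs (m + 1) = 0)
    (hxs : ∀ k, m + 1 ≤ k → xs (k + 1) = A_s *ᵥ xs k + y k • B_s)
    (hxhat : ∀ k, m + 1 ≤ k → xhat (k + 1) = A_u *ᵥ xhat k + y k • B_u)
    (hu : ∀ k, m + 1 ≤ k →
      u k = C_u ⬝ᵥ (A_u ^ k *ᵥ x0) - C_s ⬝ᵥ xs k - C_u ⬝ᵥ xhat k)
    (hxhat0 : ∀ k, m ≤ k → xhat0 k = (A_u ^ (k + 1))⁻¹ *ᵥ xhat (k + 1)) :
    ∀ k, m ≤ k →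
      xhat0 k - x0 =
        leftProd (fun i => (1 : Matrix (Fin m) (Fin m) ℝ)
            - (A_u ^ (i + 1))⁻¹ * vecMulVec B_u C_u * A_u ^ i) m k
          *ᵥ ((A_u ^ (m + 1))⁻¹ *ᵥ fun i : Fin m => w ((i : ℕ) + 1))
        + ∑ i ∈ Finset.Icc (m + 1) k,
            (w i - C_s ⬝ᵥ xs i) •
              (leftProd (fun j => (1 : Matrix (Fin m) (Fin m) ℝ)
                  - (A_u ^ (j + 1))⁻¹ * vecMulVec B_u C_u * A_u ^ j) i k
                *ᵥ ((A_u ^ (i + 1))⁻¹ *ᵥ B_u)) :=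
  estimate_error_explicit_general m p A_u hA B_u C_u C_s x0 w u y xs xhat xhat0 hy hu_init
    hxhat_init hxhat hu hxhat0
end

section
/- Consider the initialized feedback coding scheme 𝕂 run twice with the same matrices (A_s, A_u, B_s, B_u, C_s, C_u) and the same noise sequence w, but with two (possibly different) messages x_{u0} and x_{u0}' in ℝ^m, producing channel inputs u(k) and u'(k) respectively. Then u(k) = u'(k) for every k ≥ m+1; that is, after the first m steps the channel inputs are determined by the noise sequence w(1), …, w(k−1) alone and carry no dependence on the message. -/
open Matrix

/-- Running the initialized feedback coding scheme 𝕂 twice with the same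
system matrices and the same noise sequence `w` but with (possibly different) messages
`x_{u0}` and `x_{u0}'` produces identical channel inputs `u(k) = u'(k)` for all
`k ≥ m+1`: after the first `m` steps the inputs carry no dependence on the message. -/
theorem inputs_message_independent (m p : ℕ) (hm : 1 ≤ m)
    (A_u : Matrix (Fin m) (Fin m) ℝ) (hA : IsUnit A_u.det)
    (A_s : Matrix (Fin p) (Fin p) ℝ)
    (B_u : Fin m → ℝ) (B_s : Fin p → ℝ) (C_u : Fin m → ℝ) (C_s : Fin p → ℝ)
    (x0 x0' : Fin m → ℝ) (w : ℕ → ℝ)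
    -- first run, with message x0
    (u y : ℕ → ℝ) (xs : ℕ → Fin p → ℝ) (xhat : ℕ → Fin m → ℝ)
    (hy : ∀ k, y k = u k + w k)
    (hu_init : ∀ i : Fin m, u ((i : ℕ) + 1) = (A_u ^ (m + 1) *ᵥ x0) i)
    (hxhat_init : xhat (m + 1) = fun i : Fin m => y ((i : ℕ) + 1))
    (hxs_init : xs (m + 1) = 0)
    (hxs : ∀ k, m + 1 ≤ k → xs (k + 1) = A_s *ᵥ xs k + y k • B_s)
    (hxhat : ∀ k, m + 1 ≤ k → xhat (k + 1) = A_u *ᵥ xhat k + y k • B_u)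
    (hu : ∀ k, m + 1 ≤ k →
      u k = C_u ⬝ᵥ (A_u ^ k *ᵥ x0) - C_s ⬝ᵥ xs k - C_u ⬝ᵥ xhat k)
    -- second run, with message x0'
    (u' y' : ℕ → ℝ) (xs' : ℕ → Fin p → ℝ) (xhat' : ℕ → Fin m → ℝ)
    (hy' : ∀ k, y' k = u' k + w k)
    (hu_init' : ∀ i : Fin m, u' ((i : ℕ) + 1) = (A_u ^ (m + 1) *ᵥ x0') i)
    (hxhat_init' : xhat' (m + 1) = fun i : Fin m => y' ((i : ℕ) + 1))
    (hxs_init' : xs' (m + 1) = 0)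
    (hxs' : ∀ k, m + 1 ≤ k → xs' (k + 1) = A_s *ᵥ xs' k + y' k • B_s)
    (hxhat' : ∀ k, m + 1 ≤ k → xhat' (k + 1) = A_u *ᵥ xhat' k + y' k • B_u)
    (hu' : ∀ k, m + 1 ≤ k →
      u' k = C_u ⬝ᵥ (A_u ^ k *ᵥ x0') - C_s ⬝ᵥ xs' k - C_u ⬝ᵥ xhat' k) :
    ∀ k, m + 1 ≤ k → u k = u' k := by
  have key : ∀ k, m + 1 ≤ k →
      (xhat k - xhat' k = A_u ^ k *ᵥ (x0 - x0')) ∧ xs k = xs' k := by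
    intro k hk
    induction k, hk using Nat.le_induction with
    | base =>
      refine ⟨?_, by rw [hxs_init, hxs_init']⟩
      rw [hxhat_init, hxhat_init']
      funext i
      simp only [Pi.sub_apply, hy, hy', hu_init i, hu_init' i, mulVec_sub]
      ring
    | succ k hk ih =>
      have huu : u k = u' k := by
        rw [hu k hk, hu' k hk, ih.2]
        have h1 : C_u ⬝ᵥ xhat k - C_u ⬝ᵥ xhat' k = C_u ⬝ᵥ (A_u ^ k *ᵥ (x0 - x0')) := by
          rw [← dotProduct_sub, ih.1]
        have h2 : C_u ⬝ᵥ (A_u ^ k *ᵥ x0) - C_u ⬝ᵥ (A_u ^ k *ᵥ x0') =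
            C_u ⬝ᵥ (A_u ^ k *ᵥ (x0 - x0')) := by
          rw [← dotProduct_sub, ← mulVec_sub]
        linarith
      have hyy : y k = y' k := by rw [hy, hy', huu]
      refine ⟨?_, by rw [hxs k hk, hxs' k hk, ih.2, hyy]⟩
      rw [hxhat k hk, hxhat' k hk, hyy]
      have : A_u *ᵥ xhat k - A_u *ᵥ xhat' k = A_u ^ (k + 1) *ᵥ (x0 - x0') := by
        rw [← mulVec_sub, ih.1, pow_succ', mulVec_mulVec]
      funext i
      simpa [Pi.sub_apply, Pi.add_apply] using congrFun this i
  intro k hk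
  rw [hu k hk, hu' k hk, (key k hk).2]
  have h1 : C_u ⬝ᵥ xhat k - C_u ⬝ᵥ xhat' k = C_u ⬝ᵥ (A_u ^ k *ᵥ (x0 - x0')) := by
    rw [← dotProduct_sub, (key k hk).1]
  have h2 : C_u ⬝ᵥ (A_u ^ k *ᵥ x0) - C_u ⬝ᵥ (A_u ^ k *ᵥ x0') =
      C_u ⬝ᵥ (A_u ^ k *ᵥ (x0 - x0')) := by
    rw [← dotProduct_sub, ← mulVec_sub]
  linarith
end

section
/- Let a > 1 be real, and consider the scalar feedback coding scheme with A_u = a, B_u = −√(a² − 1)/a, C_u = −√(a² − 1), no stable part, message x_{u0} ∈ ℝ, noise sequence w(1), w(2), …, channel output y(k) = u(k) + w(k), initialization u(1) = a² x_{u0} and x̂_u(2) = y(1), and for k ≥ 2: x̂_u(k+1) = a x̂_u(k) + B_u y(k), u(k) = C_u a^k x_{u0} − C_u x̂_u(k), with message estimate x̂_{u0}(k) = a^{−(k+1)} x̂_u(k+1). Then for every k ≥ 2: u(k) = √(a² − 1) · a^k · (x̂_{u0}(k−1) − x_{u0}) and x̂_{u0}(k) = x̂_{u0}(k−1) − a^{−k−2}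 √(a² − 1) · y(k); i.e., the scheme coincides (up to a constant scaling of the message) with the Schalkwijk–Kailath scheme. -/
/-- The scalar channel-output-based feedback coding scheme with
`A_u = a > 1`, `B_u = −√(a²−1)/a`, `C_u = −√(a²−1)` and no stable part coincides with
the Schalkwijk–Kailath scheme: for every `k ≥ 2`,
`u(k) = √(a²−1)·a^k·(x̂_{u0}(k−1) − x_{u0})` and
`x̂_{u0}(k) = x̂_{u0}(k−1) − a^{−k−2}·√(a²−1)·y(k)`. -/
theorem scheme_is_schalkwijk_kailath (a : ℝ) (ha : 1 < a)
    (B_u C_u : ℝ) (hB : B_u = -Real.sqrt (a ^ 2 - 1) / a)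
    (hC : C_u = -Real.sqrt (a ^ 2 - 1))
    (x0 : ℝ) (w : ℕ → ℝ) (u y xhat xhat0 : ℕ → ℝ)
    (hy : ∀ k, y k = u k + w k)
    (hu1 : u 1 = a ^ 2 * x0)
    (hxhat2 : xhat 2 = y 1)
    (hxhat : ∀ k, 2 ≤ k → xhat (k + 1) = a * xhat k + B_u * y k)
    (hu : ∀ k, 2 ≤ k → u k = C_u * a ^ k * x0 - C_u * xhat k)
    (hxhat0 : ∀ k, 1 ≤ k → xhat0 k = (a ^ (k + 1))⁻¹ * xhat (k + 1)) :
    ∀ k, 2 ≤ k →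
      u k = Real.sqrt (a ^ 2 - 1) * a ^ k * (xhat0 (k - 1) - x0) ∧
      xhat0 k = xhat0 (k - 1) - (a ^ (k + 2))⁻¹ * Real.sqrt (a ^ 2 - 1) * y k := by
  intro k hk
  have ha0 : a ≠ 0 := by linarith
  obtain ⟨m, rfl⟩ : ∃ m, k = m + 2 := ⟨k - 2, by omega⟩
  have h1 : m + 2 - 1 = m + 1 := by omega
  rw [h1]
  constructor
  · rw [hu _ (by omega), hxhat0 (m + 1) (by omega), hC]
    field_simp
    ring
  · rw [hxhat0 (m + 2) (by omega), hxhat0 (m + 1) (by omega), hxhat (m + 2) (by omega), hB]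
    field_simp
    ring
end

section
/- Let a, B_u, C_u be real numbers with a ≠ 0. Let w(1), w(2), … and q(1), q(2), … be real sequences, let x_{u0} ∈ ℝ, and consider the quantized-feedback scheme with initialization u(1) = a² x_{u0} and x̂_u(2) = y(1) + q(1), where y(k) = u(k) + w(k), and for k ≥ 2: x̂_u(k+1) = a·x̂_u(k) + B_u·(y(k) + q(k)) and u(k) = C_u·a^k·x_{u0} − C_u·x̂_u(k). Then: (a) u(2) = −C_u·(w(1) + q(1)); and (b) if the scheme is run a second time with a different message x_{u0}' ∈ ℝ but the same sequences w and q, producing inputs u'(k), then u(k) = u'(k) for every k ≥ 2. In particular, for k ≥ 2 the channel inputs depend only on the past forward-channel noise w and quantization noise q, not on the message. -/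
/-- For the quantized-feedback scheme initialized by `u(1) = a² x_{u0}`
and `x̂_u(2) = y(1) + q(1)`: (a) `u(2) = −C_u (w(1) + q(1))`, and (b) running the scheme
with a different message `x_{u0}'` but the same noise sequences `w` and `q` produces
the same channel inputs `u(k) = u'(k)` for all `k ≥ 2`; i.e., after the first step the
inputs depend only on the noises, not on the message. -/
theorem quantized_inputs_message_independent (a B_u C_u : ℝ) (ha : a ≠ 0)
    (w q : ℕ → ℝ) (x0 x0' : ℝ)
    -- first run, with message x0
    (u y xhat : ℕ → ℝ)
    (hy : ∀ k, y k = u k + w k)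
    (hu1 : u 1 = a ^ 2 * x0)
    (hxhat2 : xhat 2 = y 1 + q 1)
    (hxhat : ∀ k, 2 ≤ k → xhat (k + 1) = a * xhat k + B_u * (y k + q k))
    (hu : ∀ k, 2 ≤ k → u k = C_u * a ^ k * x0 - C_u * xhat k)
    -- second run, with message x0'
    (u' y' xhat' : ℕ → ℝ)
    (hy' : ∀ k, y' k = u' k + w k)
    (hu1' : u' 1 = a ^ 2 * x0')
    (hxhat2' : xhat' 2 = y' 1 + q 1)
    (hxhat' : ∀ k, 2 ≤ k → xhat' (k + 1) = a * xhat' k + B_u * (y' k + q k))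
    (hu' : ∀ k, 2 ≤ k → u' k = C_u * a ^ k * x0' - C_u * xhat' k) :
    u 2 = -C_u * (w 1 + q 1) ∧ ∀ k, 2 ≤ k → u k = u' k := by
  have key : ∀ k, 2 ≤ k → xhat k - a ^ k * x0 = xhat' k - a ^ k * x0' := by
    intro k hk
    induction k, hk using Nat.le_induction with
    | base =>
      rw [hxhat2, hxhat2', hy 1, hy' 1, hu1, hu1']
      ring
    | succ n hn ih =>
      rw [hxhat n hn, hxhat' n hn, hy n, hy' n, hu n hn, hu' n hn]
      have : xhat n = xhat' n - a ^ n * x0' + a ^ n * x0 := by linarith [ih]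
      rw [this]; ring
  constructor
  · have h2 := hu 2 le_rfl
    rw [h2, hxhat2, hy 1, hu1]; ring
  · intro k hk
    rw [hu k hk, hu' k hk]
    have := key k hk
    have : xhat k = xhat' k - a ^ k * x0' + a ^ k * x0 := by linarith
    rw [this]; ring
end

section
/- Let σ_w > 0 and σ_q > 0 be fixed. Let (P_n) be a sequence of positive reals with P_n → ∞, and for each n let r_n ≥ 0 satisfy σ_w·√(2^{2r_n} − 1) = √(P_n) − σ_q·(1 + 2^{r_n}). Then r_n / log₂(√(P_n)/(σ_w + σ_q)) → 1 as n → ∞. -/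
/-!
Put `x = 2^r`, `s = √P` and `a = σ_w + σ_q`. Since `x - 1 ≤ √(x² - 1) ≤ x` for `x ≥ 1`, the
defining equation traps `a x` between `s - σ_q` and `s + σ_w - σ_q`, so `|x - s / a| ≤ 1` and
`2^r ~ s / a`. As `s / a → ∞`, taking logarithms preserves the equivalence: `r ~ log₂ (s / a)`.
-/

open Filter Asymptotics

theorem Asymptotics.IsEquivalent.of_abs_sub_le {α : Type*} {l : Filter α} {u v : α → ℝ}
    {C : ℝ} (hv : Tendsto v l atTop) (h : ∀ᶠ n in l, |u n - v n| ≤ C) : u ~[l] v := by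
  have hbounded : (u - v) =O[l] (fun _ => (1 : ℝ)) :=
    IsBigO.of_bound C (by filter_upwards [h] with n hn using by simpa using hn)
  exact hbounded.trans_isLittleO
    ((isLittleO_one_left_iff ℝ).mpr (tendsto_norm_atTop_atTop.comp hv))

theorem Asymptotics.IsEquivalent.logb {α : Type*} {l : Filter α} {f g : α → ℝ} (b : ℝ)
    (hfg : f ~[l] g) (hg : Tendsto g l atTop) :
    (fun n => Real.logb b (f n)) ~[l] (fun n => Real.logb b (g n)) :=
  (hfg.log hg).div (IsEquivalent.refl (u := fun _ => Real.log b))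

theorem abs_two_rpow_sub_div_le_one {σw σq s r : ℝ} (hw : 0 ≤ σw) (hq : 0 < σq)
    (hr0 : 0 ≤ r)
    (hr : σw * √((2 : ℝ) ^ (2 * r) - 1) = s - σq * (1 + (2 : ℝ) ^ r)) :
    |(2 : ℝ) ^ r - s / (σw + σq)| ≤ 1 := by
  set x : ℝ := (2 : ℝ) ^ r
  have hx : 1 ≤ x := Real.one_le_rpow one_le_two hr0
  have hsq : (2 : ℝ) ^ (2 * r) = x ^ 2 := by
    rw [mul_comm, Real.rpow_mul zero_le_two, Real.rpow_two]
  rw [hsq] at hr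
  have hupper : √(x ^ 2 - 1) ≤ x := (Real.sqrt_le_left (by linarith)).mpr (by linarith)
  have hlower : x - 1 ≤ √(x ^ 2 - 1) :=
    (Real.le_sqrt (by linarith) (by nlinarith)).mpr (by linarith)
  have ha : 0 < σw + σq := by linarith
  have hdiff : x - s / (σw + σq) = ((σw + σq) * x - s) / (σw + σq) := by field_simp
  rw [hdiff, abs_div, abs_of_pos ha, div_le_one ha, abs_le]
  constructor <;>
    linarith [mul_le_mul_of_nonneg_left hupper hw, mul_le_mul_of_nonneg_left hlower hw]

theorem rq_high_power_asymptotics_general (σw σq : ℝ) (hw : 0 < σw) (hq : 0 < σq)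
    (P : ℕ → ℝ)
    (hP : Tendsto P atTop atTop)
    (r : ℕ → ℝ) (hr0 : ∀ n, 0 ≤ r n)
    (hr : ∀ n, σw * Real.sqrt ((2 : ℝ) ^ (2 * r n) - 1) =
      Real.sqrt (P n) - σq * (1 + (2 : ℝ) ^ r n)) :
    Tendsto (fun n => r n / Real.logb 2 (Real.sqrt (P n) / (σw + σq)))
      atTop (nhds 1) := by
  set v : ℕ → ℝ := fun n => Real.sqrt (P n) / (σw + σq)
  have hv : Tendsto v atTop atTop :=
    (Real.tendsto_sqrt_atTop.comp hP).atTop_div_const (by linarith)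
  have hx : (fun n => (2 : ℝ) ^ r n) ~[atTop] v :=
    .of_abs_sub_le hv (.of_forall fun n => abs_two_rpow_sub_div_le_one hw.le hq (hr0 n) (hr n))
  have hr_equiv : r ~[atTop] fun n => Real.logb 2 (v n) :=
    (hx.logb 2 hv).congr_left (.of_forall fun n => Real.logb_rpow two_pos one_lt_two.ne')
  exact (isEquivalent_iff_tendsto_one
    ((Real.tendsto_logb_atTop one_lt_two).comp hv |>.eventually_ne_atTop 0)).mp hr_equiv

/-- For fixed `σ_w, σ_q > 0`, if `P_n → ∞` and each `r_n ≥ 0` solves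
`σ_w·√(2^{2r_n} − 1) = √P_n − σ_q·(1 + 2^{r_n})`, then
`r_n / log₂(√P_n/(σ_w + σ_q)) → 1`. -/
theorem rq_high_power_asymptotics (σw σq : ℝ) (hw : 0 < σw) (hq : 0 < σq)
    (P : ℕ → ℝ) (hPpos : ∀ n, 0 < P n)
    (hP : Tendsto P atTop atTop)
    (r : ℕ → ℝ) (hr0 : ∀ n, 0 ≤ r n)
    (hr : ∀ n, σw * Real.sqrt ((2 : ℝ) ^ (2 * r n) - 1) =
      Real.sqrt (P n) - σq * (1 + (2 : ℝ) ^ r n)) :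
    Tendsto (fun n => r n / Real.logb 2 (Real.sqrt (P n) / (σw + σq)))
      atTop (nhds 1) :=
  rq_high_power_asymptotics_general σw σq hw hq P hP r hr0 hr
end
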